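/- Let n ≥ 1, θ : Fin n → ℝ, and p : Fin n × Fin n → [0,1]. Consider the Bernoulli-Plackett-Luce model, which samples a permutation π of {1,…,n} from the Plackett-Luce distribution with logits θ and, independently, mutually independent Bernoulli variables b_{ij} with parameters p_{ij}. The joint score of a sample M' = (π, b) is the vector G(M') whose Plackett-Luce block has (reordered) entries G_i(π) = 1 − Σ_{k=1}^{i} exp(θ_{π_i}) / (Σ_{u=k}^n exp(θ_{π_u})) and whose Bernoulli block has entries b_{ij} − p_{ij}. Let f be any real-valued function of (π, b), let m ∈ ℝ, and suppose (f(M') − m)² ≤ V for every (π, b). Then the REINFORCE estimator g(M') = (f(M') − m)·G(M') satisfies Var(g) ≤ E[‖g(M')‖₂²] ≤ V · ( n + Σ_{i,j} p_{ij}(1 − p_{ij}) ), where Var(g) denotes the trace of the covariance matrix of g, i.e., Var(g) = E[‖g‖₂²] − ‖E[g]‖₂². -/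

import Mathlib

open Finset

/-- The Plackett-Luce probability of a permutation `π` of `{1,…,n}` with logits `θ`. -/
noncomputable def plackettLuce {n : ℕ} (θ : Fin n → ℝ) (π : Equiv.Perm (Fin n)) : ℝ :=
  ∏ k : Fin n,
    Real.exp (θ (π k)) / ∑ u ∈ Finset.univ.filter (fun u => k ≤ u), Real.exp (θ (π u))

/-- Joint probability of a `(permutation, edge mask)` sample under the
Bernoulli-Plackett-Luce model. -/
noncomputable def bplProb {n : ℕ} (θ : Fin n → ℝ) (p : Fin n → Fin n → ℝ)
    (ω : Equiv.Perm (Fin n) × (Fin n → Fin n → Bool)) : ℝ :=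
  plackettLuce θ ω.1 * ∏ i : Fin n, ∏ j : Fin n, (if ω.2 i j then p i j else 1 - p i j)

/-- The Plackett-Luce score component at rank position `i`:
`G_i(π) = 1 − Σ_{k=1}^{i} exp(θ_{π_i}) / (Σ_{u=k}^n exp(θ_{π_u}))`. -/
noncomputable def plScore {n : ℕ} (θ : Fin n → ℝ) (π : Equiv.Perm (Fin n)) (i : Fin n) : ℝ :=
  1 - ∑ k ∈ Finset.univ.filter (fun k => k ≤ i),
        Real.exp (θ (π i)) / ∑ u ∈ Finset.univ.filter (fun u => k ≤ u), Real.exp (θ (π u))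

/-- The joint score vector of a Bernoulli-Plackett-Luce sample `M' = (π, b)`:
its Plackett-Luce block has entries `G_i(π)` and its Bernoulli block has
entries `b_{ij} − p_{ij}`. -/
noncomputable def bplScore {n : ℕ} (θ : Fin n → ℝ) (p : Fin n → Fin n → ℝ)
    (ω : Equiv.Perm (Fin n) × (Fin n → Fin n → Bool)) :
    Fin n ⊕ Fin n × Fin n → ℝ :=
  Sum.elim (fun i => plScore θ ω.1 i)
    (fun ij => (if ω.2 ij.1 ij.2 then (1 : ℝ) else 0) - p ij.1 ij.2)

/-! The Bernoulli block of the score has mean square `∑ p (1 - p)`, whatever `π` is. For the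
Plackett-Luce block, split a permutation into its top item `p`, drawn with probability
`softmax θ p`, and the ranking of the remaining items, which is Plackett-Luce with their logits.
The score splits accordingly: its first entry is `1 - softmax θ p`, and the others are the scores
of the remaining ranking minus the softmax of their items. Since a score has mean zero, the cross
terms vanish, and by induction on `n` the mean square of the score grows by
`1 - ∑ t, softmax θ t ^ 2 ≤ 1` per item. Finally `(f - m) ^ 2 ≤ V` comes out of the expectation. -/

section ProductDistribution

variable {ι α R : Type*} [Fintype ι] [DecidableEq ι] [Fintype α] [CommSemiring R]

theorem sum_prod_of_sum_eq_one {g : ι → α → R} (hg : ∀ i, ∑ x, g i x = 1) :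
    ∑ b : ι → α, ∏ i, g i (b i) = 1 := by
  simp [← Fintype.prod_sum, hg]

theorem sum_prod_mul_apply_of_sum_eq_one {g : ι → α → R} (hg : ∀ i, ∑ x, g i x = 1)
    (h : α → R) (i₀ : ι) :
    ∑ b : ι → α, (∏ i, g i (b i)) * h (b i₀) = ∑ x, g i₀ x * h x := by
  have hmarked (b : ι → α) : (∏ i, g i (b i)) * h (b i₀)
      = ∏ i, g i (b i) * (if i = i₀ then h (b i) else 1) := by
    rw [prod_mul_distrib, Fintype.prod_ite_eq']
  rw [Fintype.sum_congr _ _ hmarked,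
    ← Fintype.prod_sum fun i x => g i x * (if i = i₀ then h x else 1),
    Fintype.prod_eq_single i₀ fun i hi => by simp [hi, hg]]
  simp

theorem sum_prod_mul_sum_apply_of_sum_eq_one {g : ι → α → R} (hg : ∀ i, ∑ x, g i x = 1)
    (h : ι → α → R) :
    ∑ b : ι → α, (∏ i, g i (b i)) * ∑ i, h i (b i) = ∑ i, ∑ x, g i x * h i x := by
  simp only [mul_sum]
  rw [sum_comm]
  exact sum_congr rfl fun i _ => sum_prod_mul_apply_of_sum_eq_one hg (h i) i

end ProductDistribution

section Bernoulli

variable {ι κ : Type*} [Fintype ι] [DecidableEq ι] [Fintype κ] [DecidableEq κ]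

def bernoulliWeight (q : ℝ) (x : Bool) : ℝ := if x then q else 1 - q

theorem sum_bernoulliWeight (q : ℝ) : ∑ x, bernoulliWeight q x = 1 := by
  simp [bernoulliWeight]

theorem sum_bernoulliWeight_mul_sq (q : ℝ) :
    ∑ x, bernoulliWeight q x * ((if x then 1 else 0) - q) ^ 2 = q * (1 - q) := by
  rw [Fintype.sum_bool]
  simp only [bernoulliWeight, if_true, Bool.false_eq_true, if_false]
  ring

theorem sum_prod_bernoulliWeight (p : ι → ℝ) :
    ∑ b : ι → Bool, ∏ i, bernoulliWeight (p i) (b i) = 1 :=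
  sum_prod_of_sum_eq_one fun i => sum_bernoulliWeight (p i)

theorem sum_prod_bernoulliWeight_mul_sum_sq (p : ι → ℝ) :
    ∑ b : ι → Bool, (∏ i, bernoulliWeight (p i) (b i)) * ∑ i, ((if b i then 1 else 0) - p i) ^ 2
      = ∑ i, p i * (1 - p i) :=
  (sum_prod_mul_sum_apply_of_sum_eq_one (fun i => sum_bernoulliWeight (p i)) _).trans
    (sum_congr rfl fun i _ => sum_bernoulliWeight_mul_sq (p i))

theorem sum_prod_prod_bernoulliWeight (p : ι → κ → ℝ) :
    ∑ b : ι → κ → Bool, ∏ i, ∏ j, bernoulliWeight (p i j) (b i j) = 1 :=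
  sum_prod_of_sum_eq_one fun i => sum_prod_bernoulliWeight (p i)

theorem sum_prod_prod_bernoulliWeight_mul_sum_sum_sq (p : ι → κ → ℝ) :
    ∑ b : ι → κ → Bool, (∏ i, ∏ j, bernoulliWeight (p i j) (b i j))
        * ∑ i, ∑ j, ((if b i j then 1 else 0) - p i j) ^ 2
      = ∑ i, ∑ j, p i j * (1 - p i j) :=
  (sum_prod_mul_sum_apply_of_sum_eq_one (fun i => sum_prod_bernoulliWeight (p i)) _).trans
    (sum_congr rfl fun i _ => sum_prod_bernoulliWeight_mul_sum_sq (p i))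

end Bernoulli

section PlackettLuce

open Equiv

variable {n : ℕ}

noncomputable def softmax (θ : Fin n → ℝ) (t : Fin n) : ℝ :=
  Real.exp (θ t) / ∑ u, Real.exp (θ u)

theorem softmax_nonneg (θ : Fin n → ℝ) (t : Fin n) : 0 ≤ softmax θ t :=
  div_nonneg (Real.exp_pos _).le (sum_nonneg fun _ _ => (Real.exp_pos _).le)

theorem sum_softmax (θ : Fin (n + 1) → ℝ) : ∑ t, softmax θ t = 1 := by
  simp only [softmax]
  rw [← sum_div, div_self]
  exact (sum_pos (fun _ _ => Real.exp_pos _) univ_nonempty).ne'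

theorem plackettLuce_nonneg (θ : Fin n → ℝ) (π : Perm (Fin n)) : 0 ≤ plackettLuce θ π :=
  prod_nonneg fun _ _ =>
    div_nonneg (Real.exp_pos _).le (sum_nonneg fun _ _ => (Real.exp_pos _).le)

theorem add_sum_swap_succ {M : Type*} [AddCommMonoid M] (p : Fin (n + 1)) (h : Fin (n + 1) → M) :
    h p + ∑ j : Fin n, h (swap 0 p j.succ) = ∑ t, h t := by
  rw [← Equiv.sum_comp (swap 0 p) h, Fin.sum_univ_succ, swap_apply_left]

/-- `decomposeFin.symm (p, e)` ranks `p` first and then the other items, relabelled by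
`j ↦ swap 0 p j.succ`, in the order `e`; these are their logits. -/
def tailLogits (θ : Fin (n + 1) → ℝ) (p : Fin (n + 1)) (j : Fin n) : ℝ := θ (swap 0 p j.succ)

theorem sum_filter_zero_le_exp (θ : Fin (n + 1) → ℝ) (π : Perm (Fin (n + 1))) :
    ∑ u ∈ univ.filter (fun u => 0 ≤ u), Real.exp (θ (π u)) = ∑ t, Real.exp (θ t) := by
  rw [filter_true_of_mem fun u _ => Fin.zero_le u]
  exact Equiv.sum_comp π fun t => Real.exp (θ t)

theorem sum_filter_succ_le_exp_decomposeFin_symm (θ : Fin (n + 1) → ℝ) (p : Fin (n + 1))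
    (e : Perm (Fin n)) (k : Fin n) :
    ∑ u ∈ univ.filter (fun u => k.succ ≤ u), Real.exp (θ (Perm.decomposeFin.symm (p, e) u))
      = ∑ u ∈ univ.filter (fun u => k ≤ u), Real.exp (tailLogits θ p (e u)) := by
  simp only [sum_filter, Fin.sum_univ_succ, Fin.succ_le_succ_iff,
    Perm.decomposeFin_symm_apply_succ, tailLogits]
  simp [Fin.succ_ne_zero]

theorem plackettLuce_decomposeFin_symm (θ : Fin (n + 1) → ℝ) (p : Fin (n + 1))
    (e : Perm (Fin n)) :
    plackettLuce θ (Perm.decomposeFin.symm (p, e))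
      = softmax θ p * plackettLuce (tailLogits θ p) e := by
  rw [plackettLuce, Fin.prod_univ_succ, Perm.decomposeFin_symm_apply_zero,
    sum_filter_zero_le_exp, plackettLuce]
  simp only [sum_filter_succ_le_exp_decomposeFin_symm, Perm.decomposeFin_symm_apply_succ]
  rfl

theorem plScore_decomposeFin_symm_zero (θ : Fin (n + 1) → ℝ) (p : Fin (n + 1))
    (e : Perm (Fin n)) :
    plScore θ (Perm.decomposeFin.symm (p, e)) 0 = 1 - softmax θ p := by
  have : univ.filter (fun k : Fin (n + 1) => k ≤ 0) = {0} := by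
    ext k; simp
  rw [plScore, this, sum_singleton, Perm.decomposeFin_symm_apply_zero, sum_filter_zero_le_exp,
    softmax]

theorem plScore_decomposeFin_symm_succ (θ : Fin (n + 1) → ℝ) (p : Fin (n + 1))
    (e : Perm (Fin n)) (i : Fin n) :
    plScore θ (Perm.decomposeFin.symm (p, e)) i.succ
      = plScore (tailLogits θ p) e i - softmax θ (swap 0 p (e i).succ) := by
  rw [plScore, plScore, sum_filter, Fin.sum_univ_succ, if_pos (Fin.zero_le _),
    sum_filter_zero_le_exp]
  simp only [Fin.succ_le_succ_iff, sum_filter_succ_le_exp_decomposeFin_symm,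
    Perm.decomposeFin_symm_apply_succ, ← sum_filter, softmax, tailLogits]
  ring

theorem sum_apply_plScore_decomposeFin_symm (θ : Fin (n + 1) → ℝ) (p : Fin (n + 1))
    (e : Perm (Fin n)) (F : Fin (n + 1) → ℝ → ℝ) :
    ∑ i, F (Perm.decomposeFin.symm (p, e) i) (plScore θ (Perm.decomposeFin.symm (p, e)) i)
      = F p (1 - softmax θ p) + ∑ i, F (swap 0 p (e i).succ)
          (plScore (tailLogits θ p) e i - softmax θ (swap 0 p (e i).succ)) := by
  simp only [Fin.sum_univ_succ, Perm.decomposeFin_symm_apply_zero,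
    plScore_decomposeFin_symm_zero, Perm.decomposeFin_symm_apply_succ,
    plScore_decomposeFin_symm_succ]

theorem sum_mul_plScore_decomposeFin_symm (θ v : Fin (n + 1) → ℝ) (p : Fin (n + 1))
    (e : Perm (Fin n)) :
    ∑ i, v (Perm.decomposeFin.symm (p, e) i) * plScore θ (Perm.decomposeFin.symm (p, e)) i
      = (v p * (1 - softmax θ p) - ∑ j : Fin n, v (swap 0 p j.succ) * softmax θ (swap 0 p j.succ))
        + ∑ i, v (swap 0 p (e i).succ) * plScore (tailLogits θ p) e i := by
  rw [sum_apply_plScore_decomposeFin_symm θ p e fun t g => v t * g]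
  simp only [mul_sub, sum_sub_distrib]
  rw [Equiv.sum_comp e fun j => v (swap 0 p j.succ) * softmax θ (swap 0 p j.succ)]
  ring

theorem sum_plScore_sq_decomposeFin_symm (θ : Fin (n + 1) → ℝ) (p : Fin (n + 1))
    (e : Perm (Fin n)) :
    ∑ i, plScore θ (Perm.decomposeFin.symm (p, e)) i ^ 2
      = ((1 - softmax θ p) ^ 2 + ∑ j : Fin n, softmax θ (swap 0 p j.succ) ^ 2)
        + (∑ i, plScore (tailLogits θ p) e i ^ 2
          + ∑ i, -2 * softmax θ (swap 0 p (e i).succ) * plScore (tailLogits θ p) e i) := by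
  rw [sum_apply_plScore_decomposeFin_symm θ p e fun _ g => g ^ 2,
    ← Equiv.sum_comp e fun j => softmax θ (swap 0 p j.succ) ^ 2, add_assoc]
  simp only [← sum_add_distrib]
  exact congrArg _ (sum_congr rfl fun i _ => by ring)

theorem sum_plackettLuce_mul_eq_sum_softmax_mul (θ : Fin (n + 1) → ℝ)
    (F : Perm (Fin (n + 1)) → ℝ) :
    ∑ π, plackettLuce θ π * F π = ∑ p, softmax θ p *
      ∑ e, plackettLuce (tailLogits θ p) e * F (Perm.decomposeFin.symm (p, e)) := by
  rw [← Equiv.sum_comp Perm.decomposeFin.symm, Fintype.sum_prod_type]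
  simp only [plackettLuce_decomposeFin_symm, mul_assoc, mul_sum]

theorem sum_plackettLuce (θ : Fin n → ℝ) : ∑ π, plackettLuce θ π = 1 := by
  induction n with
  | zero => simp [plackettLuce]
  | succ n ih =>
    simpa only [mul_one, ih, sum_softmax] using
      sum_plackettLuce_mul_eq_sum_softmax_mul θ fun _ => 1

theorem sum_plackettLuce_mul_add (θ : Fin n → ℝ) (c : ℝ) (F : Perm (Fin n) → ℝ) :
    ∑ π, plackettLuce θ π * (c + F π) = c + ∑ π, plackettLuce θ π * F π := by
  simp only [mul_add, sum_add_distrib, mul_comm _ c, ← mul_sum, sum_plackettLuce, mul_one]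

theorem sum_plackettLuce_mul_sum_mul_plScore (θ v : Fin n → ℝ) :
    ∑ π, plackettLuce θ π * ∑ i, v (π i) * plScore θ π i = 0 := by
  induction n with
  | zero => simp
  | succ n ih =>
    have hfirst (p : Fin (n + 1)) :
        v p * (1 - softmax θ p) - ∑ j : Fin n, v (swap 0 p j.succ) * softmax θ (swap 0 p j.succ)
          = v p - ∑ t, v t * softmax θ t := by
      rw [← add_sum_swap_succ p fun t => v t * softmax θ t]
      ring
    calc ∑ π, plackettLuce θ π * ∑ i, v (π i) * plScore θ π i
        = ∑ p, softmax θ p * (v p - ∑ t, v t * softmax θ t) := by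
          rw [sum_plackettLuce_mul_eq_sum_softmax_mul]
          refine sum_congr rfl fun p _ => ?_
          simp only [sum_mul_plScore_decomposeFin_symm, sum_plackettLuce_mul_add, hfirst]
          rw [ih _ fun j => v (swap 0 p j.succ), add_zero]
      _ = 0 := by
          simp only [mul_sub, sum_sub_distrib, ← sum_mul, sum_softmax, one_mul]
          exact sub_eq_zero.2 (sum_congr rfl fun _ _ => mul_comm _ _)

theorem sum_plackettLuce_mul_sum_plScore_sq_le (θ : Fin n → ℝ) :
    ∑ π, plackettLuce θ π * ∑ i, plScore θ π i ^ 2 ≤ n := by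
  induction n with
  | zero => simp
  | succ n ih =>
    have hfirst (p : Fin (n + 1)) :
        (1 - softmax θ p) ^ 2 + ∑ j : Fin n, softmax θ (swap 0 p j.succ) ^ 2
          = 1 - 2 * softmax θ p + ∑ t, softmax θ t ^ 2 := by
      rw [← add_sum_swap_succ p fun t => softmax θ t ^ 2]
      ring
    calc ∑ π, plackettLuce θ π * ∑ i, plScore θ π i ^ 2
        = ∑ p, softmax θ p * ((1 - 2 * softmax θ p + ∑ t, softmax θ t ^ 2)
            + ∑ e, plackettLuce (tailLogits θ p) e * ∑ i, plScore (tailLogits θ p) e i ^ 2) := by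
          rw [sum_plackettLuce_mul_eq_sum_softmax_mul]
          refine sum_congr rfl fun p _ => ?_
          simp only [sum_plScore_sq_decomposeFin_symm, hfirst]
          rw [sum_plackettLuce_mul_add]
          simp only [mul_add, sum_add_distrib]
          rw [sum_plackettLuce_mul_sum_mul_plScore _ fun j => -2 * softmax θ (swap 0 p j.succ),
            mul_zero, add_zero]
      _ ≤ ∑ p, softmax θ p * ((1 - 2 * softmax θ p + ∑ t, softmax θ t ^ 2) + n) := by
          gcongr with p
          · exact softmax_nonneg θ p
          · exact ih _
      _ = n + 1 - ∑ t, softmax θ t ^ 2 := by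
          simp only [mul_add, mul_sub, sum_add_distrib, sum_sub_distrib, ← sum_mul, sum_softmax,
            mul_left_comm _ (2 : ℝ), ← mul_sum, ← sq]
          ring
      _ ≤ (n + 1 : ℕ) := by
          push_cast
          linarith [sum_nonneg fun t (_ : t ∈ univ) => sq_nonneg (softmax θ t)]

end PlackettLuce

section BernoulliPlackettLuce

variable {n : ℕ} (θ : Fin n → ℝ) (p : Fin n → Fin n → ℝ)

theorem bplProb_nonneg (hp : ∀ i j, 0 ≤ p i j ∧ p i j ≤ 1)
    (ω : Equiv.Perm (Fin n) × (Fin n → Fin n → Bool)) : 0 ≤ bplProb θ p ω := by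
  refine mul_nonneg (plackettLuce_nonneg θ ω.1) (prod_nonneg fun i _ => prod_nonneg fun j _ => ?_)
  split_ifs
  · exact (hp i j).1
  · linarith [(hp i j).2]

theorem bplProb_mk (π : Equiv.Perm (Fin n)) (b : Fin n → Fin n → Bool) :
    bplProb θ p (π, b) = plackettLuce θ π * ∏ i, ∏ j, bernoulliWeight (p i j) (b i j) :=
  rfl

theorem sum_bplScore_sq (ω : Equiv.Perm (Fin n) × (Fin n → Fin n → Bool)) :
    ∑ t, bplScore θ p ω t ^ 2
      = ∑ i, plScore θ ω.1 i ^ 2 + ∑ i, ∑ j, ((if ω.2 i j then 1 else 0) - p i j) ^ 2 := by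
  simp [bplScore, Fintype.sum_sum_type, Fintype.sum_prod_type]

theorem sum_bplProb_mul_sum_bplScore_sq :
    ∑ ω, bplProb θ p ω * ∑ t, bplScore θ p ω t ^ 2
      = ∑ π, plackettLuce θ π * ∑ i, plScore θ π i ^ 2 + ∑ i, ∑ j, p i j * (1 - p i j) := by
  have hmask (π : Equiv.Perm (Fin n)) :
      ∑ b : Fin n → Fin n → Bool, bplProb θ p (π, b) * ∑ t, bplScore θ p (π, b) t ^ 2
        = plackettLuce θ π * (∑ i, plScore θ π i ^ 2 + ∑ i, ∑ j, p i j * (1 - p i j)) := by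
    simp only [sum_bplScore_sq, bplProb_mk, mul_assoc, ← mul_sum, mul_add, sum_add_distrib,
      ← sum_mul]
    rw [sum_prod_prod_bernoulliWeight, one_mul, sum_prod_prod_bernoulliWeight_mul_sum_sum_sq]
  simp only [Fintype.sum_prod_type, hmask, mul_add, sum_add_distrib, ← sum_mul,
    sum_plackettLuce, one_mul]

theorem sum_bplProb_mul_sum_bplScore_sq_le :
    ∑ ω, bplProb θ p ω * ∑ t, bplScore θ p ω t ^ 2 ≤ n + ∑ i, ∑ j, p i j * (1 - p i j) := by
  rw [sum_bplProb_mul_sum_bplScore_sq]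
  gcongr
  exact sum_plackettLuce_mul_sum_plScore_sq_le θ

end BernoulliPlackettLuce

theorem bpl_reinforce_variance_bound_general {n : ℕ}
    (θ : Fin n → ℝ) (p : Fin n → Fin n → ℝ) (hp : ∀ i j, 0 ≤ p i j ∧ p i j ≤ 1)
    (f : Equiv.Perm (Fin n) × (Fin n → Fin n → Bool) → ℝ) (m V : ℝ)
    (hV : ∀ ω : Equiv.Perm (Fin n) × (Fin n → Fin n → Bool), (f ω - m) ^ 2 ≤ V) :
    ((∑ ω : Equiv.Perm (Fin n) × (Fin n → Fin n → Bool),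
          bplProb θ p ω * ∑ t : Fin n ⊕ Fin n × Fin n, ((f ω - m) * bplScore θ p ω t) ^ 2)
        - ∑ t : Fin n ⊕ Fin n × Fin n,
            (∑ ω : Equiv.Perm (Fin n) × (Fin n → Fin n → Bool),
              bplProb θ p ω * ((f ω - m) * bplScore θ p ω t)) ^ 2)
      ≤ (∑ ω : Equiv.Perm (Fin n) × (Fin n → Fin n → Bool),
          bplProb θ p ω * ∑ t : Fin n ⊕ Fin n × Fin n, ((f ω - m) * bplScore θ p ω t) ^ 2)
    ∧ (∑ ω : Equiv.Perm (Fin n) × (Fin n → Fin n → Bool),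
          bplProb θ p ω * ∑ t : Fin n ⊕ Fin n × Fin n, ((f ω - m) * bplScore θ p ω t) ^ 2)
        ≤ V * ((n : ℝ) + ∑ i : Fin n, ∑ j : Fin n, p i j * (1 - p i j)) := by
  refine ⟨sub_le_self _ (sum_nonneg fun _ _ => sq_nonneg _), ?_⟩
  have hV0 : 0 ≤ V := (sq_nonneg _).trans (hV (1, fun _ _ => true))
  calc ∑ ω, bplProb θ p ω * ∑ t, ((f ω - m) * bplScore θ p ω t) ^ 2
      = ∑ ω, (f ω - m) ^ 2 * (bplProb θ p ω * ∑ t, bplScore θ p ω t ^ 2) := by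
        simp only [mul_pow, ← mul_sum]
        exact sum_congr rfl fun _ _ => mul_left_comm _ _ _
    _ ≤ ∑ ω, V * (bplProb θ p ω * ∑ t, bplScore θ p ω t ^ 2) := by
        gcongr with ω
        · exact mul_nonneg (bplProb_nonneg θ p hp ω) (sum_nonneg fun _ _ => sq_nonneg _)
        · exact hV ω
    _ ≤ V * (n + ∑ i, ∑ j, p i j * (1 - p i j)) := by
        rw [← mul_sum]
        exact mul_le_mul_of_nonneg_left (sum_bplProb_mul_sum_bplScore_sq_le θ p) hV0

/-- Variance bound for the REINFORCE estimator
`g(M') = (f(M') − m) · G(M')` under the Bernoulli-Plackett-Luce model: if the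
squared centered reward is uniformly bounded by `V`, then
`Var(g) ≤ E[‖g‖₂²] ≤ V · (n + Σ_{i,j} p_{ij}(1 − p_{ij}))`, where `Var(g)`
denotes the trace of the covariance of `g`, i.e. `E[‖g‖₂²] − ‖E[g]‖₂²`. -/
theorem bpl_reinforce_variance_bound {n : ℕ} (hn : 1 ≤ n)
    (θ : Fin n → ℝ) (p : Fin n → Fin n → ℝ) (hp : ∀ i j, 0 ≤ p i j ∧ p i j ≤ 1)
    (f : Equiv.Perm (Fin n) × (Fin n → Fin n → Bool) → ℝ) (m V : ℝ)
    (hV : ∀ ω : Equiv.Perm (Fin n) × (Fin n → Fin n → Bool), (f ω - m) ^ 2 ≤ V) :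
    ((∑ ω : Equiv.Perm (Fin n) × (Fin n → Fin n → Bool),
          bplProb θ p ω * ∑ t : Fin n ⊕ Fin n × Fin n, ((f ω - m) * bplScore θ p ω t) ^ 2)
        - ∑ t : Fin n ⊕ Fin n × Fin n,
            (∑ ω : Equiv.Perm (Fin n) × (Fin n → Fin n → Bool),
              bplProb θ p ω * ((f ω - m) * bplScore θ p ω t)) ^ 2)
      ≤ (∑ ω : Equiv.Perm (Fin n) × (Fin n → Fin n → Bool),
          bplProb θ p ω * ∑ t : Fin n ⊕ Fin n × Fin n, ((f ω - m) * bplScore θ p ω t) ^ 2)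
    ∧ (∑ ω : Equiv.Perm (Fin n) × (Fin n → Fin n → Bool),
          bplProb θ p ω * ∑ t : Fin n ⊕ Fin n × Fin n, ((f ω - m) * bplScore θ p ω t) ^ 2)
        ≤ V * ((n : ℝ) + ∑ i : Fin n, ∑ j : Fin n, p i j * (1 - p i j)) :=
  bpl_reinforce_variance_bound_general θ p hp f m V hV
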